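/- Let B₁ = [[1,1,0],[1,0,0],[0,0,0]] and B₂ = [[0,1,0],[1,1,0],[0,0,0]] as real symmetric 3×3 matrices. Then {(xᵀB₁x, xᵀB₂x) : x ∈ ℝ³} = ℝ², and in particular this joint numerical range is not an acute cone. -/
import Mathlib


open Matrix

lemma key_not_acute (a b : ℝ) : ∃ s t : ℝ, s^2 + 2*s*t = a ∧ t^2 + 2*s*t = b := by
  set c := a + b with hc
  set d := a - b with hd
  set r := Real.sqrt (c^2 + 3*d^2) with hrdef
  have hr0 : 0 ≤ r := Real.sqrt_nonneg _
  have hr2 : r^2 = c^2 + 3*d^2 := Real.sq_sqrt (by positivity)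
  have hrc : c ≤ r := by nlinarith
  by_cases hw : r - c = 0
  · have hd0 : d = 0 := by nlinarith
    have hc0 : 0 ≤ c := by linarith
    refine ⟨Real.sqrt (c/6), Real.sqrt (c/6), ?_, ?_⟩ <;>
    · have h6 : (Real.sqrt (c/6))^2 = c/6 := Real.sq_sqrt (by positivity)
      nlinarith
  · set v := Real.sqrt (r - c) with hvdef
    have hv2 : v^2 = r - c := Real.sq_sqrt (by linarith)
    have hvne : v ≠ 0 := by
      intro h
      apply hw
      rw [h] at hv2; simpa using hv2.symm
    set u := d / v with hu
    have huv : u * v = d := div_mul_cancel₀ d hvne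
    refine ⟨(u + v)/2, (u - v)/2, ?_, ?_⟩ <;>
    · have hu2 : u^2 * v^2 = d^2 := by rw [← huv]; ring
      have hvsq : v^2 > 0 := lt_of_le_of_ne (sq_nonneg v) (by
        intro h; exact hvne (by nlinarith))
      nlinarith [sq_nonneg (u*v - d), sq_nonneg v, hu2, hv2, hr2]

lemma surj_not_acute : {y : ℝ × ℝ | ∃ x : Fin 3 → ℝ,
        y = (x ⬝ᵥ (!![1,1,0;1,0,0;0,0,0] : Matrix (Fin 3) (Fin 3) ℝ) *ᵥ x,
             x ⬝ᵥ (!![0,1,0;1,1,0;0,0,0] : Matrix (Fin 3) (Fin 3) ℝ) *ᵥ x)}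
      = Set.univ := by
  ext ⟨a, b⟩
  simp only [Set.mem_setOf_eq, Set.mem_univ, iff_true]
  obtain ⟨s, t, h1, h2⟩ := key_not_acute a b
  refine ⟨![s, t, 0], ?_⟩
  simp [Matrix.mulVec, dotProduct, Fin.sum_univ_three, Prod.ext_iff]
  constructor <;> nlinarith

theorem not_acute_example :
    {y : ℝ × ℝ | ∃ x : Fin 3 → ℝ,
        y = (x ⬝ᵥ (!![1,1,0;1,0,0;0,0,0] : Matrix (Fin 3) (Fin 3) ℝ) *ᵥ x,
             x ⬝ᵥ (!![0,1,0;1,1,0;0,0,0] : Matrix (Fin 3) (Fin 3) ℝ) *ᵥ x)}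
      = Set.univ ∧
    ∃ y : ℝ × ℝ, y ≠ 0 ∧
      y ∈ {y : ℝ × ℝ | ∃ x : Fin 3 → ℝ,
        y = (x ⬝ᵥ (!![1,1,0;1,0,0;0,0,0] : Matrix (Fin 3) (Fin 3) ℝ) *ᵥ x,
             x ⬝ᵥ (!![0,1,0;1,1,0;0,0,0] : Matrix (Fin 3) (Fin 3) ℝ) *ᵥ x)} ∧
      -y ∈ {y : ℝ × ℝ | ∃ x : Fin 3 → ℝ,
        y = (x ⬝ᵥ (!![1,1,0;1,0,0;0,0,0] : Matrix (Fin 3) (Fin 3) ℝ) *ᵥ x,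
             x ⬝ᵥ (!![0,1,0;1,1,0;0,0,0] : Matrix (Fin 3) (Fin 3) ℝ) *ᵥ x)} := by
  refine ⟨surj_not_acute, ⟨(1, 0), ?_, ?_, ?_⟩⟩
  · simp [Prod.ext_iff]
  · rw [surj_not_acute]; trivial
  · rw [surj_not_acute]; trivial
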